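/- arXiv:2110.01543 — 5 statements merged into one kernel-verified Lean document; each statement's English description precedes it below -/
import Mathlib

section
/- Let d, m ≥ 1, let X, R ∈ ℝ^{d×m}, let v ∈ ℝ^d, and let α ≥ 0, β > 0, δ > 0 be real parameters. Let Γ ∈ ℝ^m be any minimizer of the regularized least-squares objective Γ' ↦ ‖v − RΓ'‖₂² + δ‖XΓ'‖₂², and set Hv := βv − α(X + βR)Γ (the damped, adaptively regularized Anderson mixing update applied to v). Then ‖Hv‖₂² ≤ 2(β²(1 + 2α² − 2α) + α²δ⁻¹)‖v‖₂². -/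
/-!
Testing the minimality of `Γ` against `Γ' = 0` gives `‖r‖² + δ‖XΓ‖² ≤ ‖v‖²` for the residual
`r = v − RΓ`. Since `Hv = β(1 − α)v + α(βr − XΓ)`, the triangle inequality, `(a + b)² ≤ 2(a² + b²)`
and the weighted Cauchy–Schwarz bound `(βb + c)² ≤ (β² + δ⁻¹)(b² + δc²)` give the estimate.
-/

open Matrix

noncomputable def norm2 {n : ℕ} (v : Fin n → ℝ) : ℝ := Real.sqrt (∑ i, v i ^ 2)

lemma norm2_eq_norm {n : ℕ} (w : Fin n → ℝ) : norm2 w = ‖WithLp.toLp 2 w‖ := by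
  simp [norm2, EuclideanSpace.norm_eq]

lemma sq_mul_add_le_mul_sq_add_mul_sq {δ : ℝ} (hδ : 0 < δ) (β b c : ℝ) :
    (β * b + c) ^ 2 ≤ (β ^ 2 + δ⁻¹) * (b ^ 2 + δ * c ^ 2) := by
  have hgap : (β ^ 2 + δ⁻¹) * (b ^ 2 + δ * c ^ 2) - (β * b + c) ^ 2
      = δ⁻¹ * (β * δ * c - b) ^ 2 := by
    field_simp
    ring
  nlinarith [mul_nonneg (inv_nonneg.2 hδ.le) (sq_nonneg (β * δ * c - b))]

section Mixing

variable {E : Type*} [SeminormedAddCommGroup E] [NormedSpace ℝ E]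

lemma sq_norm_smul_sub_le {δ : ℝ} (hδ : 0 < δ) (β : ℝ) (r x : E) :
    ‖β • r - x‖ ^ 2 ≤ (β ^ 2 + δ⁻¹) * (‖r‖ ^ 2 + δ * ‖x‖ ^ 2) := by
  calc ‖β • r - x‖ ^ 2 ≤ (|β| * ‖r‖ + ‖x‖) ^ 2 := by
        gcongr
        exact (norm_sub_le _ _).trans_eq (by rw [norm_smul, Real.norm_eq_abs])
    _ ≤ (|β| ^ 2 + δ⁻¹) * (‖r‖ ^ 2 + δ * ‖x‖ ^ 2) := sq_mul_add_le_mul_sq_add_mul_sq hδ _ _ _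
    _ = (β ^ 2 + δ⁻¹) * (‖r‖ ^ 2 + δ * ‖x‖ ^ 2) := by rw [sq_abs]

lemma sq_norm_mixing_le {α β δ : ℝ} (hδ : 0 < δ) {v r x : E}
    (hmin : ‖r‖ ^ 2 + δ * ‖x‖ ^ 2 ≤ ‖v‖ ^ 2) :
    ‖(β - α * β) • v + α • (β • r - x)‖ ^ 2 ≤
      2 * (β ^ 2 * (1 + 2 * α ^ 2 - 2 * α) + α ^ 2 * δ⁻¹) * ‖v‖ ^ 2 := by
  calc ‖(β - α * β) • v + α • (β • r - x)‖ ^ 2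
        ≤ (‖(β - α * β) • v‖ + ‖α • (β • r - x)‖) ^ 2 := by gcongr; exact norm_add_le _ _
    _ ≤ 2 * (‖(β - α * β) • v‖ ^ 2 + ‖α • (β • r - x)‖ ^ 2) := add_sq_le
    _ = 2 * ((β - α * β) ^ 2 * ‖v‖ ^ 2 + α ^ 2 * ‖β • r - x‖ ^ 2) := by
        simp only [norm_smul, mul_pow, Real.norm_eq_abs, sq_abs]
    _ ≤ 2 * ((β - α * β) ^ 2 * ‖v‖ ^ 2 + α ^ 2 * ((β ^ 2 + δ⁻¹) * ‖v‖ ^ 2)) := by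
        gcongr
        exact (sq_norm_smul_sub_le hδ β r x).trans (by gcongr)
    _ = 2 * (β ^ 2 * (1 + 2 * α ^ 2 - 2 * α) + α ^ 2 * δ⁻¹) * ‖v‖ ^ 2 := by ring

end Mixing

theorem sam_update_norm_bound_general (d m : ℕ)
    (X R : Matrix (Fin d) (Fin m) ℝ) (v : Fin d → ℝ)
    (α β δ : ℝ) (hδ : 0 < δ)
    (Γ : Fin m → ℝ)
    (hΓ : ∀ Γ' : Fin m → ℝ,
      norm2 (v - R.mulVec Γ) ^ 2 + δ * norm2 (X.mulVec Γ) ^ 2 ≤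
        norm2 (v - R.mulVec Γ') ^ 2 + δ * norm2 (X.mulVec Γ') ^ 2) :
    norm2 (β • v - α • ((X + β • R).mulVec Γ)) ^ 2 ≤
      2 * (β ^ 2 * (1 + 2 * α ^ 2 - 2 * α) + α ^ 2 * δ⁻¹) * norm2 v ^ 2 := by
  have hmin := hΓ 0
  simp only [mulVec_zero, sub_zero, norm2_eq_norm, WithLp.toLp_zero, norm_zero,
    zero_pow two_ne_zero, mul_zero, add_zero] at hmin
  have hsplit : β • v - α • ((X + β • R).mulVec Γ)
      = (β - α * β) • v + α • (β • (v - R.mulVec Γ) - X.mulVec Γ) := by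
    rw [add_mulVec, smul_mulVec]
    module
  rw [hsplit, norm2_eq_norm, norm2_eq_norm]
  simpa only [WithLp.toLp_add, WithLp.toLp_smul, WithLp.toLp_sub] using sq_norm_mixing_le hδ hmin

/-- **Lemma 1** (norm bound for the damped, adaptively regularized Anderson mixing update).
If `Γ` minimizes `Γ' ↦ ‖v − RΓ'‖₂² + δ‖XΓ'‖₂²` and `Hv := βv − α(X + βR)Γ`, then
`‖Hv‖₂² ≤ 2(β²(1 + 2α² − 2α) + α²δ⁻¹)‖v‖₂²`. -/
theorem sam_update_norm_bound (d m : ℕ) (hd : 1 ≤ d) (hm : 1 ≤ m)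
    (X R : Matrix (Fin d) (Fin m) ℝ) (v : Fin d → ℝ)
    (α β δ : ℝ) (hα : 0 ≤ α) (hβ : 0 < β) (hδ : 0 < δ)
    (Γ : Fin m → ℝ)
    (hΓ : ∀ Γ' : Fin m → ℝ,
      norm2 (v - R.mulVec Γ) ^ 2 + δ * norm2 (X.mulVec Γ) ^ 2 ≤
        norm2 (v - R.mulVec Γ') ^ 2 + δ * norm2 (X.mulVec Γ') ^ 2) :
    norm2 (β • v - α • ((X + β • R).mulVec Γ)) ^ 2 ≤
      2 * (β ^ 2 * (1 + 2 * α ^ 2 - 2 * α) + α ^ 2 * δ⁻¹) * norm2 v ^ 2 :=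
  sam_update_norm_bound_general d m X R v α β δ hδ Γ hΓ
end

section
/- Let d, m ≥ 1, X, R ∈ ℝ^{d×m}, δ > 0, and set Z := RᵀR + δXᵀX ∈ ℝ^{m×m} (a symmetric positive semidefinite matrix), with Z^{1/2} its positive semidefinite square root. Then for every t > 0 the matrix Z² + tI is invertible and the spectral norm of N₁(t) := X Z^{1/2}(Z² + tI)⁻¹ Z^{1/2} Rᵀ ∈ ℝ^{d×d} satisfies ‖N₁(t)‖₂² ≤ δ⁻¹. -/
/-! Everything is a function of `Z`. With `H = h(Z)` for `h(z) = √(z / (z² + t))`, the middle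
factor `Z^{1/2} (Z² + tI)⁻¹ Z^{1/2}` equals `H²`, so `N₁(t) = (XH)(RH)ᵀ`. In the Loewner order
`XᵀX ≤ δ⁻¹ Z` and `RᵀR ≤ Z`; conjugating by `H` gives `‖XH‖² = ‖H XᵀX H‖ ≤ δ⁻¹` and
`‖RH‖² ≤ 1`, because `HZH = (z² / (z² + t))(Z) ≤ I`. -/

open Matrix

/-- The spectral (ℓ₂ operator) norm of a real matrix. -/
noncomputable def specNorm {a b : ℕ} (M : Matrix (Fin a) (Fin b) ℝ) : ℝ :=
  ‖LinearMap.toContinuousLinearMap (Matrix.toEuclideanLin M)‖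

/-- The positive semidefinite square root of a positive semidefinite matrix, as defined in the
older Mathlib (`Matrix.PosSemidef.sqrt`, since removed). -/
noncomputable def Matrix.PosSemidef.sqrt {n : Type*} [Fintype n] [DecidableEq n]
    {A : Matrix n n ℝ} (hA : A.PosSemidef) : Matrix n n ℝ :=
  hA.1.eigenvectorUnitary.1 * diagonal (fun i => Real.sqrt (hA.1.eigenvalues i)) *
    (star hA.1.eigenvectorUnitary : Matrix n n ℝ)

open scoped Matrix.Norms.L2Operator MatrixOrder

lemma specNorm_eq_l2_opNorm {a b : ℕ} (M : Matrix (Fin a) (Fin b) ℝ) : specNorm M = ‖M‖ := rfl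

lemma Matrix.PosSemidef.sqrt_eq_cfc {n : Type*} [Fintype n] [DecidableEq n]
    {A : Matrix n n ℝ} (hA : A.PosSemidef) : hA.sqrt = cfc Real.sqrt A := by
  rw [hA.1.cfc_eq, IsHermitian.cfc, Matrix.PosSemidef.sqrt, Unitary.conjStarAlgAut_apply]
  rfl

lemma Matrix.l2_opNorm_le_of_le_smul_one {n : Type*} [Fintype n] [DecidableEq n]
    {P : Matrix n n ℝ} {c : ℝ} (hc : 0 ≤ c) (hP : 0 ≤ P) (hPc : P ≤ c • 1) : ‖P‖ ≤ c := by
  rw [← Algebra.algebraMap_eq_smul_one, le_algebraMap_iff_spectrum_le] at hPc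
  rw [← cfc_id ℝ P]
  refine norm_cfc_le hc fun x hx => ?_
  rw [id, Real.norm_of_nonneg (spectrum_nonneg_of_nonneg hP hx)]
  exact hPc x hx

lemma Matrix.l2_opNorm_mul_sq_le_of_conjTranspose_mul_self_le {m n : Type*} [Fintype m]
    [Fintype n] [DecidableEq n] {C : Matrix m n ℝ} {H A : Matrix n n ℝ} {c : ℝ} (hc : 0 ≤ c)
    (hH : H.IsHermitian) (hC : Cᴴ * C ≤ c • A) (hHAH : H * A * H ≤ 1) : ‖C * H‖ ^ 2 ≤ c := by
  rw [sq, ← l2_opNorm_conjTranspose_mul_self]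
  refine l2_opNorm_le_of_le_smul_one hc (posSemidef_conjTranspose_mul_self _).nonneg ?_
  calc (C * H)ᴴ * (C * H) = H * (Cᴴ * C) * H := by
        simp only [conjTranspose_mul, hH.eq, Matrix.mul_assoc]
    _ ≤ H * (c • A) * H := IsSelfAdjoint.conjugate_le_conjugate hC hH
    _ = c • (H * A * H) := by rw [mul_smul_comm, smul_mul_assoc]
    _ ≤ c • 1 := smul_le_smul_of_nonneg_left hHAH hc

section
variable {n : Type*} [Fintype n] [DecidableEq n] {Z : Matrix n n ℝ} {t : ℝ}

lemma Matrix.inv_sq_add_smul_one_eq_cfc (hZ : IsSelfAdjoint Z) (ht : 0 < t) :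
    (Z ^ 2 + t • 1)⁻¹ = cfc (fun z => (z ^ 2 + t)⁻¹) Z := by
  rw [cfc_inv (fun z => z ^ 2 + t) Z (fun z _ => by positivity), nonsing_inv_eq_ringInverse,
    cfc_add (a := Z) (fun z => z ^ 2) (fun _ => t), cfc_pow_id Z 2, cfc_const t Z,
    Algebra.algebraMap_eq_smul_one]

lemma Matrix.cfc_sqrt_mul_inv_mul_cfc_sqrt (hZ : 0 ≤ Z) (ht : 0 < t) :
    cfc Real.sqrt Z * (Z ^ 2 + t • 1)⁻¹ * cfc Real.sqrt Z =
      cfc (fun z => √(z / (z ^ 2 + t))) Z * cfc (fun z => √(z / (z ^ 2 + t))) Z := by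
  have hcont (f : ℝ → ℝ) : ContinuousOn f (spectrum ℝ Z) := Z.finite_real_spectrum.continuousOn f
  rw [inv_sq_add_smul_one_eq_cfc (IsSelfAdjoint.of_nonneg hZ) ht,
    ← cfc_mul _ _ Z (hcont _) (hcont _), ← cfc_mul _ _ Z (hcont _) (hcont _),
    ← cfc_mul _ _ Z (hcont _) (hcont _)]
  refine cfc_congr fun z hz => ?_
  have hz : 0 ≤ z := spectrum_nonneg_of_nonneg hZ hz
  rw [Real.mul_self_sqrt (by positivity), mul_right_comm, Real.mul_self_sqrt hz, div_eq_mul_inv]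

lemma Matrix.cfc_mul_mul_cfc_le_one (hZ : 0 ≤ Z) (ht : 0 < t) :
    cfc (fun z => √(z / (z ^ 2 + t))) Z * Z * cfc (fun z => √(z / (z ^ 2 + t))) Z ≤ 1 := by
  have hcont (f : ℝ → ℝ) : ContinuousOn f (spectrum ℝ Z) := Z.finite_real_spectrum.continuousOn f
  nth_rw 2 [← cfc_id' ℝ Z]
  rw [← cfc_mul _ _ Z (hcont _) (hcont _), ← cfc_mul _ _ Z (hcont _) (hcont _)]
  refine cfc_le_one _ Z fun z hz => ?_
  have hz : 0 ≤ z := spectrum_nonneg_of_nonneg hZ hz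
  rw [mul_right_comm, Real.mul_self_sqrt (by positivity), div_mul_eq_mul_div,
    div_le_one (by positivity)]
  nlinarith

end

theorem sam_N1_specnorm_bound_general (d m : ℕ)
    (X R : Matrix (Fin d) (Fin m) ℝ) (δ : ℝ) (hδ : 0 < δ)
    (Z : Matrix (Fin m) (Fin m) ℝ) (hZdef : Z = Rᵀ * R + δ • (Xᵀ * X))
    (hZ : Z.PosSemidef) :
    ∀ t : ℝ, 0 < t →
      IsUnit (Z ^ 2 + t • (1 : Matrix (Fin m) (Fin m) ℝ)) ∧
      specNorm (X * hZ.sqrt * (Z ^ 2 + t • (1 : Matrix (Fin m) (Fin m) ℝ))⁻¹ * hZ.sqrt * Rᵀ) ^ 2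
        ≤ δ⁻¹ := by
  intro t ht
  refine ⟨(PosDef.posSemidef_add (hZ.pow 2) (PosDef.one.smul ht)).isUnit, ?_⟩
  set H := cfc (fun z => √(z / (z ^ 2 + t))) Z
  have hH : H.IsHermitian := cfc_predicate _ Z
  have hHZH : H * Z * H ≤ 1 := cfc_mul_mul_cfc_le_one hZ.nonneg ht
  have hX : Xᴴ * X ≤ δ⁻¹ • Z := by
    rw [conjTranspose_eq_transpose_of_trivial, le_iff, hZdef, smul_add, smul_smul,
      inv_mul_cancel₀ hδ.ne', one_smul, add_sub_cancel_right]
    exact (posSemidef_conjTranspose_mul_self R).smul (inv_nonneg.2 hδ.le)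
  have hR : Rᴴ * R ≤ (1 : ℝ) • Z := by
    rw [conjTranspose_eq_transpose_of_trivial, le_iff, one_smul, hZdef, add_sub_cancel_left]
    exact (posSemidef_conjTranspose_mul_self X).smul hδ.le
  have hN : X * hZ.sqrt * (Z ^ 2 + t • 1)⁻¹ * hZ.sqrt * Rᵀ = X * H * (R * H)ᴴ := by
    rw [hZ.sqrt_eq_cfc, Matrix.mul_assoc X, Matrix.mul_assoc X,
      cfc_sqrt_mul_inv_mul_cfc_sqrt hZ.nonneg ht, conjTranspose_mul, hH.eq,
      conjTranspose_eq_transpose_of_trivial]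
    simp only [Matrix.mul_assoc, H]
  calc specNorm (X * hZ.sqrt * (Z ^ 2 + t • 1)⁻¹ * hZ.sqrt * Rᵀ) ^ 2
      = ‖X * H * (R * H)ᴴ‖ ^ 2 := by rw [hN, specNorm_eq_l2_opNorm]
    _ ≤ (‖X * H‖ * ‖R * H‖) ^ 2 := by
      gcongr
      exact (l2_opNorm_mul _ _).trans_eq (by rw [l2_opNorm_conjTranspose])
    _ = ‖X * H‖ ^ 2 * ‖R * H‖ ^ 2 := mul_pow _ _ _
    _ ≤ δ⁻¹ * 1 := mul_le_mul
        (l2_opNorm_mul_sq_le_of_conjTranspose_mul_self_le (inv_nonneg.2 hδ.le) hH hX hHZH)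
        (l2_opNorm_mul_sq_le_of_conjTranspose_mul_self_le zero_le_one hH hR hHZH)
        (by positivity) (inv_nonneg.2 hδ.le)
    _ = δ⁻¹ := mul_one _

/-- Intermediate claim in the proof of Lemma 2: with `Z = RᵀR + δXᵀX` (δ > 0) and `Z^{1/2}`
its positive semidefinite square root, for every `t > 0` the matrix `Z² + tI` is invertible and
`‖X Z^{1/2}(Z² + tI)⁻¹ Z^{1/2} Rᵀ‖₂² ≤ δ⁻¹`. -/
theorem sam_N1_specnorm_bound (d m : ℕ) (hd : 1 ≤ d) (hm : 1 ≤ m)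
    (X R : Matrix (Fin d) (Fin m) ℝ) (δ : ℝ) (hδ : 0 < δ)
    (Z : Matrix (Fin m) (Fin m) ℝ) (hZdef : Z = Rᵀ * R + δ • (Xᵀ * X))
    (hZ : Z.PosSemidef) :
    ∀ t : ℝ, 0 < t →
      IsUnit (Z ^ 2 + t • (1 : Matrix (Fin m) (Fin m) ℝ)) ∧
      specNorm (X * hZ.sqrt * (Z ^ 2 + t • (1 : Matrix (Fin m) (Fin m) ℝ))⁻¹ * hZ.sqrt * Rᵀ) ^ 2
        ≤ δ⁻¹ :=
  sam_N1_specnorm_bound_general d m X R δ hδ Z hZdef hZ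
end

section
/- In the stochastic SAM step framework with parameters α_k ≥ 0, β_k > 0, δ_k > 0 and properties (P1) and (P3), almost surely ∇f(x_k)ᵀ E[H_k r_k | 𝓕_k] ≤ −(1/2)β_k μ ‖∇f(x_k)‖₂² + (1/2)·(α_k²(δ_k^{-1/2} + β_k)²/(β_k μ))·σ²/n. -/
set_option maxHeartbeats 1000000


open Matrix MeasureTheory Filter

lemma norm2_nonneg {m : ℕ} (v : Fin m → ℝ) : 0 ≤ norm2 v := Real.sqrt_nonneg _

lemma norm2_sq_eq {m : ℕ} (v : Fin m → ℝ) : norm2 v ^ 2 = ∑ i, v i ^ 2 :=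
  Real.sq_sqrt (Finset.sum_nonneg fun _ _ => sq_nonneg _)

lemma abs_apply_le_norm2 {m : ℕ} (v : Fin m → ℝ) (i : Fin m) : |v i| ≤ norm2 v := by
  rw [← Real.sqrt_sq_eq_abs]
  exact Real.sqrt_le_sqrt
    (Finset.single_le_sum (fun j _ => sq_nonneg (v j)) (Finset.mem_univ i))

lemma dotProduct_le_norm2 {m : ℕ} (v w : Fin m → ℝ) : v ⬝ᵥ w ≤ norm2 v * norm2 w := by
  have h := Finset.sum_mul_sq_le_sq_mul_sq Finset.univ v w
  have h0 : 0 ≤ norm2 v * norm2 w := mul_nonneg (norm2_nonneg v) (norm2_nonneg w)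
  have hsq : (v ⬝ᵥ w) ^ 2 ≤ (norm2 v * norm2 w) ^ 2 := by
    rw [mul_pow, norm2_sq_eq, norm2_sq_eq]
    simpa [dotProduct] using h
  nlinarith [hsq, h0]

lemma pi_norm_le_norm2 {m : ℕ} (v : Fin m → ℝ) : ‖v‖ ≤ norm2 v := by
  rw [pi_norm_le_iff_of_nonneg (norm2_nonneg v)]
  intro i
  rw [Real.norm_eq_abs]
  exact abs_apply_le_norm2 v i


lemma integrable_apply {Ω : Type} [m0 : MeasurableSpace Ω] {μ : Measure Ω}
    {k : ℕ} {W : Ω → Fin k → ℝ} (hW : Integrable W μ) (i : Fin k) :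
    Integrable (fun ω => W ω i) μ := by
  set L : (Fin k → ℝ) →L[ℝ] ℝ := ContinuousLinearMap.proj i with hL
  have h2 : Integrable (fun ω => L (W ω)) μ := L.integrable_comp hW
  simpa [hL] using h2

/-- Conditional expectation commutes with coordinate evaluation. -/
lemma condexp_eval {Ω : Type} [m0 : MeasurableSpace Ω] (μ : Measure Ω) [IsProbabilityMeasure μ]
    (F : MeasurableSpace Ω) (hF : F ≤ m0) {k : ℕ} {W : Ω → Fin k → ℝ}
    (hW : Integrable W μ) (i : Fin k) :
    (fun ω => (μ[W|F]) ω i) =ᵐ[μ] μ[fun ω => W ω i|F] := by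
  classical
  letI : MeasurableSpace Ω := m0
  set L : (Fin k → ℝ) →L[ℝ] ℝ := ContinuousLinearMap.proj i with hL
  have hcint : Integrable (μ[W|F]) μ := integrable_condExp
  have hWi : Integrable (fun ω => W ω i) μ := integrable_apply hW i
  refine ae_eq_condExp_of_forall_setIntegral_eq hF hWi
    (fun s _ _ => ?_) (fun s hs hμs => ?_) ?_
  · have h2 : Integrable (fun ω => L ((μ[W|F]) ω)) μ := L.integrable_comp hcint
    have h3 : Integrable (fun ω => (μ[W|F]) ω i) μ := by simpa [hL] using h2
    exact h3.integrableOn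
  · have hci : Integrable (μ[W|F]) (μ.restrict s) := hcint.integrableOn
    have hWs : Integrable W (μ.restrict s) := hW.integrableOn
    have h1 : ∫ x in s, L ((μ[W|F]) x) ∂μ = L (∫ x in s, (μ[W|F]) x ∂μ) :=
      L.integral_comp_comm hci
    have h2 : ∫ x in s, L (W x) ∂μ = L (∫ x in s, W x ∂μ) := L.integral_comp_comm hWs
    have h3 : ∫ x in s, (μ[W|F]) x ∂μ = ∫ x in s, W x ∂μ := setIntegral_condExp hF hW hs
    simp only [hL, ContinuousLinearMap.proj_apply] at h1 h2
    rw [h1, h2, h3]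
  · exact StronglyMeasurable.aestronglyMeasurable
      ((continuous_apply i).comp_stronglyMeasurable stronglyMeasurable_condExp)

lemma integrable_dot_of_bdd {Ω : Type} [m0 : MeasurableSpace Ω] {μ : Measure Ω}
    [IsProbabilityMeasure μ] {k : ℕ} {ψ W : Ω → Fin k → ℝ} {C : ℝ}
    (hψm : ∀ i, AEStronglyMeasurable (fun ω => ψ ω i) μ)
    (hψb : ∀ ω i, |ψ ω i| ≤ C) (hW : Integrable W μ) :
    Integrable (fun ω => ψ ω ⬝ᵥ W ω) μ := by
  have hWi : ∀ i : Fin k, Integrable (fun ω => W ω i) μ := fun i =>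
    integrable_apply hW i
  have h : Integrable (fun ω => ∑ i : Fin k, ψ ω i * W ω i) μ :=
    integrable_finset_sum _ fun i _ => (hWi i).bdd_mul (c := C) (hψm i)
      (Eventually.of_forall fun ω => by simpa [Real.norm_eq_abs] using hψb ω i)
  simpa [dotProduct] using h

/-- Pull-out property: a bounded `F`-measurable vector factor can be pulled out of a
conditional expectation of a dot product. -/
lemma condexp_dot_pullout {Ω : Type} [m0 : MeasurableSpace Ω] (μ : Measure Ω)
    [IsProbabilityMeasure μ] (F : MeasurableSpace Ω) (hF : F ≤ m0) {k : ℕ}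
    {ψ W : Ω → Fin k → ℝ} {C : ℝ}
    (hψ : Measurable[F] ψ) (hψb : ∀ ω i, |ψ ω i| ≤ C) (hW : Integrable W μ) :
    μ[fun ω => ψ ω ⬝ᵥ W ω|F] =ᵐ[μ] fun ω => ψ ω ⬝ᵥ (μ[W|F]) ω := by
  classical
  letI : MeasurableSpace Ω := m0
  have hψi : ∀ i : Fin k, StronglyMeasurable[F] fun ω => ψ ω i := fun i =>
    ((measurable_pi_apply i).comp hψ).stronglyMeasurable
  have hWi : ∀ i : Fin k, Integrable (fun ω => W ω i) μ := fun i =>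
    integrable_apply hW i
  have hψm0 : ∀ i : Fin k, AEStronglyMeasurable (fun ω => ψ ω i) μ := fun i =>
    (((hψi i).mono hF)).aestronglyMeasurable
  have hprod : ∀ i : Fin k, Integrable (fun ω => ψ ω i * W ω i) μ := fun i =>
    (hWi i).bdd_mul (c := C) (hψm0 i) (Eventually.of_forall fun ω => by simpa [Real.norm_eq_abs] using hψb ω i)
  have hsum : (fun ω => ψ ω ⬝ᵥ W ω) = ∑ i : Fin k, fun ω => ψ ω i * W ω i := by
    funext ω
    rw [Finset.sum_apply]
    simp [dotProduct]
  have hi : ∀ i : Fin k,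
      μ[fun ω => ψ ω i * W ω i|F] =ᵐ[μ] fun ω => ψ ω i * (μ[W|F]) ω i := by
    intro i
    have h1 : μ[(fun ω => ψ ω i) * (fun ω => W ω i)|F]
        =ᵐ[μ] (fun ω => ψ ω i) * μ[fun ω => W ω i|F] :=
      condExp_mul_of_stronglyMeasurable_left (hψi i) (hprod i) (hWi i)
    have h2 := condexp_eval μ F hF hW i
    filter_upwards [h1, h2] with ω h1ω h2ω
    have h1ω' : (μ[fun ω' => ψ ω' i * W ω' i|F]) ω
        = ψ ω i * (μ[fun ω' => W ω' i|F]) ω := h1ω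
    rw [h1ω', ← h2ω]
  have hcs : μ[fun ω => ψ ω ⬝ᵥ W ω|F]
      =ᵐ[μ] ∑ i : Fin k, μ[fun ω => ψ ω i * W ω i|F] := by
    rw [hsum]
    exact condExp_finset_sum (fun i _ => hprod i) F
  have hall := ae_all_iff.2 hi
  filter_upwards [hcs, hall] with ω hcsω hallω
  rw [hcsω, Finset.sum_apply]
  calc ∑ i : Fin k, (μ[fun ω' => ψ ω' i * W ω' i|F]) ω
      = ∑ i : Fin k, ψ ω i * (μ[W|F]) ω i := Finset.sum_congr rfl fun i _ => hallω i
    _ = ψ ω ⬝ᵥ (μ[W|F]) ω := by simp [dotProduct]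

/-- **Lemma 2 (ii)**: in the stochastic SAM step framework with properties (P1) and (P3),
almost surely `∇f(x_k)ᵀ E[H_k r_k | 𝓕_k] ≤ −(1/2)β_k μ ‖∇f(x_k)‖₂²
+ (1/2)(α_k²(δ_k^{-1/2} + β_k)²/(β_k μ)) σ²/n`. -/
theorem sam_step_inner_product_bound
    {Ω : Type} (F : MeasurableSpace Ω) [m0 : MeasurableSpace Ω] (μ : Measure Ω) [IsProbabilityMeasure μ]
    (hF : F ≤ m0)
    (d n : ℕ) (hd : 1 ≤ d) (hn : 1 ≤ n)
    (σ muc : ℝ) (hσ : 0 < σ) (hmuc : muc ∈ Set.Ioo (0 : ℝ) 1)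
    (f : (Fin d → ℝ) → ℝ) (hf : ContDiff ℝ 1 f)
    (gradf : (Fin d → ℝ) → (Fin d → ℝ))
    (hgrad : ∀ x v, fderiv ℝ f x v = gradf x ⬝ᵥ v)
    (xk : Ω → (Fin d → ℝ)) (hxk : Measurable[F] xk)
    (gk : Ω → (Fin d → ℝ)) (hgk_meas : Measurable gk)
    (hgk_int : Integrable gk μ)
    (hgk_mean : μ[gk | F] =ᵐ[μ] fun ω => gradf (xk ω))
    (hgk_var_int : Integrable (fun ω => norm2 (gk ω - gradf (xk ω)) ^ 2) μ)
    (hgk_var : μ[(fun ω => norm2 (gk ω - gradf (xk ω)) ^ 2) | F] ≤ᵐ[μ] fun _ => σ ^ 2 / n)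
    (αk βk δk : ℝ) (hαk : 0 ≤ αk) (hβk : 0 < βk) (hδk : 0 < δk)
    (H : Ω → Matrix (Fin d) (Fin d) ℝ) (hH_meas : ∀ i j, Measurable fun ω => H ω i j)
    (hP1 : ∀ᵐ ω ∂μ, ∀ p : Fin d → ℝ, βk * muc * norm2 p ^ 2 ≤ p ⬝ᵥ (H ω).mulVec p)
    (hP2 : ∀ᵐ ω ∂μ, ∀ v : Fin d → ℝ,
      norm2 ((H ω).mulVec v) ^ 2
        ≤ 2 * (βk ^ 2 * (1 + 2 * αk ^ 2 - 2 * αk) + αk ^ 2 * δk⁻¹) * norm2 v ^ 2)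
    (hP3 : ∀ᵐ ω ∂μ, ∀ v : Fin d → ℝ,
      norm2 ((βk • (1 : Matrix (Fin d) (Fin d) ℝ) - H ω).mulVec v)
        ≤ αk * ((Real.sqrt δk)⁻¹ + βk) * norm2 v)
    (hHr_int : Integrable (fun ω => (H ω).mulVec (-(gk ω))) μ) :
    (fun ω => gradf (xk ω) ⬝ᵥ ((μ[(fun ω' => (H ω').mulVec (-(gk ω'))) | F]) ω)) ≤ᵐ[μ]
      fun ω => -(1 / 2) * βk * muc * norm2 (gradf (xk ω)) ^ 2
        + (1 / 2) * (αk ^ 2 * ((Real.sqrt δk)⁻¹ + βk) ^ 2 / (βk * muc)) * (σ ^ 2 / n) := by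
  classical
  obtain ⟨hmuc0, -⟩ := hmuc
  have ht0 : 0 < βk * muc := mul_pos hβk hmuc0
  set c : ℝ := αk * ((Real.sqrt δk)⁻¹ + βk) with hcdef
  have hc0 : 0 ≤ c :=
    mul_nonneg hαk (add_nonneg (inv_nonneg.2 (Real.sqrt_nonneg _)) hβk.le)
  -- continuity and measurability of the gradient
  have hgradf_cont : Continuous gradf := by
    apply continuous_pi
    intro i
    have h1 : Continuous fun x => fderiv ℝ f x := hf.continuous_fderiv one_ne_zero
    have h2 : (fun x => gradf x i) = fun x => (fderiv ℝ f x) (Pi.single i 1) := by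
      funext x
      rw [hgrad]
      simp [dotProduct_single]
    rw [h2]
    exact h1.clm_apply continuous_const
  have hφF : Measurable[F] fun ω => gradf (xk ω) := hgradf_cont.measurable.comp hxk
  have hφm0 : Measurable[m0] fun ω => gradf (xk ω) :=
    hgradf_cont.measurable.comp (hxk.mono hF le_rfl)
  have hφSM : StronglyMeasurable[F] fun ω => gradf (xk ω) := hφF.stronglyMeasurable
  have hn2cont : Continuous fun v : Fin d → ℝ => norm2 v := by
    unfold norm2
    exact Real.continuous_sqrt.comp (by continuity)
  have hn2F : Measurable[F] fun ω => norm2 (gradf (xk ω)) :=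
    hn2cont.measurable.comp hφF
  have hn2m0 : Measurable[m0] fun ω => norm2 (gradf (xk ω)) := hn2cont.measurable.comp hφm0
  -- integrability of the error vector
  have he_measF : Measurable[m0] fun ω => gk ω - gradf (xk ω) := hgk_meas.sub hφm0
  have he_meas : Measurable[m0] fun ω => gk ω - gradf (xk ω) := he_measF
  have he_int : Integrable (fun ω => gk ω - gradf (xk ω)) μ := by
    refine Integrable.mono'
      (g := fun ω => (1 + norm2 (gk ω - gradf (xk ω)) ^ 2) / 2)
      (((integrable_const (1 : ℝ)).add hgk_var_int).div_const 2)
      he_meas.aestronglyMeasurable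
      (Eventually.of_forall fun ω => ?_)
    have h1 := pi_norm_le_norm2 (gk ω - gradf (xk ω))
    have h2 := norm2_nonneg (gk ω - gradf (xk ω))
    nlinarith [sq_nonneg (norm2 (gk ω - gradf (xk ω)) - 1)]
  have hφ_int : Integrable (fun ω => gradf (xk ω)) μ := by
    have h : (fun ω => gradf (xk ω)) = fun ω => gk ω - (gk ω - gradf (xk ω)) := by
      funext ω
      simp
    rw [h]
    exact hgk_int.sub he_int
  -- the conditional expectation of the error is zero
  have he_condexp : μ[(fun ω => gk ω - gradf (xk ω))|F] =ᵐ[μ] fun _ => (0 : Fin d → ℝ) := by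
    have h1 : μ[(fun ω => gk ω - gradf (xk ω))|F]
        =ᵐ[μ] μ[gk|F] - μ[(fun ω => gradf (xk ω))|F] := by
      have := condExp_sub (m := F) (μ := μ) hgk_int hφ_int
      exact this
    have h2 : μ[(fun ω => gradf (xk ω))|F] = fun ω => gradf (xk ω) :=
      condExp_of_stronglyMeasurable hF hφSM hφ_int
    filter_upwards [h1, hgk_mean] with ω h1ω h3ω
    have : (μ[gk|F] - μ[(fun ω' => gradf (xk ω'))|F]) ω = 0 := by
      simp [Pi.sub_apply, h2, h3ω]
    rw [h1ω, this]
  -- main step, localized to the set where the gradient norm is at most M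
  have key : ∀ M : ℕ, ∀ᵐ ω ∂μ, norm2 (gradf (xk ω)) ≤ (M : ℝ) →
      gradf (xk ω) ⬝ᵥ ((μ[(fun ω' => (H ω').mulVec (-(gk ω'))) | F]) ω) ≤
        -(1 / 2) * βk * muc * norm2 (gradf (xk ω)) ^ 2
          + (1 / 2) * (αk ^ 2 * ((Real.sqrt δk)⁻¹ + βk) ^ 2 / (βk * muc)) * (σ ^ 2 / n) := by
    intro M
    set A : Set Ω := {ω | norm2 (gradf (xk ω)) ≤ (M : ℝ)} with hAdef
    have hA : MeasurableSet[F] A := hn2F measurableSet_Iic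
    set χ : Ω → ℝ := A.indicator fun _ => (1 : ℝ) with hχdef
    have hχF : Measurable[F] χ := measurable_const.indicator hA
    have hχm0 : Measurable[m0] χ := hχF.mono hF le_rfl
    set ψ : Ω → Fin d → ℝ := fun ω => χ ω • gradf (xk ω) with hψdef
    have hψF : Measurable[F] ψ := by
      apply @measurable_pi_lambda _ _ _ F
      intro i
      exact hχF.mul ((measurable_pi_apply i).comp hφF)
    have hψb : ∀ ω i, |ψ ω i| ≤ (M : ℝ) := by
      intro ω i
      have happ : ψ ω i = χ ω * gradf (xk ω) i := rfl
      by_cases h : ω ∈ A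
      · have h1 : χ ω = 1 := by rw [hχdef]; exact Set.indicator_of_mem h _
        rw [happ, h1, one_mul]
        exact (abs_apply_le_norm2 _ i).trans h
      · have h1 : χ ω = 0 := by rw [hχdef]; exact Set.indicator_of_notMem h _
        rw [happ, h1, zero_mul, abs_zero]
        exact Nat.cast_nonneg M
    -- pull-out identities
    have hpullZ := condexp_dot_pullout (m0 := m0) μ F hF hψF hψb hHr_int
    have hpullE := condexp_dot_pullout (m0 := m0) μ F hF hψF hψb he_int
    -- integrability facts
    have hψm0 : ∀ i, AEStronglyMeasurable[m0] (fun ω => ψ ω i) μ := fun i =>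
      (hχm0.mul ((measurable_pi_apply i).comp hφm0)).aestronglyMeasurable
    have hLint : Integrable (fun ω => ψ ω ⬝ᵥ (H ω).mulVec (-(gk ω))) μ :=
      integrable_dot_of_bdd (m0 := m0) hψm0 hψb hHr_int
    have hR2int : Integrable (fun ω => ψ ω ⬝ᵥ (gk ω - gradf (xk ω))) μ :=
      integrable_dot_of_bdd (m0 := m0) hψm0 hψb he_int
    have hR1int : Integrable (fun ω => χ ω * norm2 (gradf (xk ω)) ^ 2) μ := by
      refine Integrable.mono' (integrable_const ((M : ℝ) ^ 2))
        ((hχm0.mul (hn2m0.pow_const 2)).aestronglyMeasurable)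
        (Eventually.of_forall fun ω => ?_)
      rw [Real.norm_eq_abs]
      by_cases h : ω ∈ A
      · have h1 : χ ω = 1 := by rw [hχdef]; exact Set.indicator_of_mem h _
        have h2 : norm2 (gradf (xk ω)) ≤ (M : ℝ) := h
        have h3 := norm2_nonneg (gradf (xk ω))
        rw [h1, one_mul, abs_of_nonneg (sq_nonneg _)]
        nlinarith
      · have h1 : χ ω = 0 := by rw [hχdef]; exact Set.indicator_of_notMem h _
        rw [h1, zero_mul, abs_zero]
        positivity
    -- pointwise inequality
    have hae1 : ∀ᵐ ω ∂μ, ψ ω ⬝ᵥ (H ω).mulVec (-(gk ω)) ≤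
        -(1 / 2) * (βk * muc) * (χ ω * norm2 (gradf (xk ω)) ^ 2)
          - βk * (ψ ω ⬝ᵥ (gk ω - gradf (xk ω)))
          + c ^ 2 / (2 * (βk * muc)) * norm2 (gk ω - gradf (xk ω)) ^ 2 := by
      filter_upwards [hP1, hP3] with ω h1 h3
      have hdot : ∀ w : Fin d → ℝ, ψ ω ⬝ᵥ w = χ ω * (gradf (xk ω) ⬝ᵥ w) := by
        intro w
        have : ψ ω = χ ω • gradf (xk ω) := rfl
        rw [this, smul_dotProduct, smul_eq_mul]
      have hq : -(gk ω) = -(gradf (xk ω)) + -(gk ω - gradf (xk ω)) := by abel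
      have e1 : gradf (xk ω) ⬝ᵥ (H ω).mulVec (-(gk ω)) =
          -(gradf (xk ω) ⬝ᵥ (H ω).mulVec (gradf (xk ω)))
            - gradf (xk ω) ⬝ᵥ (H ω).mulVec (gk ω - gradf (xk ω)) := by
        rw [hq, Matrix.mulVec_add, Matrix.mulVec_neg, Matrix.mulVec_neg, dotProduct_add,
          dotProduct_neg, dotProduct_neg]
        ring
      have e2 : (H ω).mulVec (gk ω - gradf (xk ω)) =
          βk • (gk ω - gradf (xk ω))
            - (βk • (1 : Matrix (Fin d) (Fin d) ℝ) - H ω).mulVec (gk ω - gradf (xk ω)) := by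
        rw [Matrix.sub_mulVec, Matrix.smul_mulVec, Matrix.one_mulVec]
        abel
      have e3 : gradf (xk ω) ⬝ᵥ (H ω).mulVec (gk ω - gradf (xk ω)) =
          βk * (gradf (xk ω) ⬝ᵥ (gk ω - gradf (xk ω)))
            - gradf (xk ω) ⬝ᵥ
              (βk • (1 : Matrix (Fin d) (Fin d) ℝ) - H ω).mulVec (gk ω - gradf (xk ω)) := by
        rw [e2, dotProduct_sub, dotProduct_smul, smul_eq_mul]
      have h1' := h1 (gradf (xk ω))
      have h3' := h3 (gk ω - gradf (xk ω))
      have hcs : gradf (xk ω) ⬝ᵥ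
          (βk • (1 : Matrix (Fin d) (Fin d) ℝ) - H ω).mulVec (gk ω - gradf (xk ω)) ≤
          norm2 (gradf (xk ω)) * (c * norm2 (gk ω - gradf (xk ω))) := by
        calc gradf (xk ω) ⬝ᵥ
            (βk • (1 : Matrix (Fin d) (Fin d) ℝ) - H ω).mulVec (gk ω - gradf (xk ω))
            ≤ norm2 (gradf (xk ω)) *
              norm2 ((βk • (1 : Matrix (Fin d) (Fin d) ℝ) - H ω).mulVec
                (gk ω - gradf (xk ω))) := dotProduct_le_norm2 _ _
          _ ≤ norm2 (gradf (xk ω)) * (c * norm2 (gk ω - gradf (xk ω))) :=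
              mul_le_mul_of_nonneg_left (by rw [hcdef]; exact h3') (norm2_nonneg _)
      have hamgm : norm2 (gradf (xk ω)) * (c * norm2 (gk ω - gradf (xk ω))) ≤
          (βk * muc) / 2 * norm2 (gradf (xk ω)) ^ 2
            + c ^ 2 / (2 * (βk * muc)) * norm2 (gk ω - gradf (xk ω)) ^ 2 := by
      -- AM-GM
        rw [← sub_nonneg]
        have hkey : (βk * muc) / 2 * norm2 (gradf (xk ω)) ^ 2
            + c ^ 2 / (2 * (βk * muc)) * norm2 (gk ω - gradf (xk ω)) ^ 2
            - norm2 (gradf (xk ω)) * (c * norm2 (gk ω - gradf (xk ω)))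
            = ((βk * muc) * norm2 (gradf (xk ω)) - c * norm2 (gk ω - gradf (xk ω))) ^ 2
              / (2 * (βk * muc)) := by
          field_simp
          ring
        rw [hkey]
        positivity
      have hbase : gradf (xk ω) ⬝ᵥ (H ω).mulVec (-(gk ω)) ≤
          -(1 / 2) * (βk * muc) * norm2 (gradf (xk ω)) ^ 2
            - βk * (gradf (xk ω) ⬝ᵥ (gk ω - gradf (xk ω)))
            + c ^ 2 / (2 * (βk * muc)) * norm2 (gk ω - gradf (xk ω)) ^ 2 := by
        rw [e1, e3]
        nlinarith [hcs, hamgm, h1']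
      rw [hdot, hdot]
      by_cases h : ω ∈ A
      · have hχ1 : χ ω = 1 := by rw [hχdef]; exact Set.indicator_of_mem h _
        rw [hχ1, one_mul, one_mul]
        linarith [hbase]
      · have hχ0 : χ ω = 0 := by rw [hχdef]; exact Set.indicator_of_notMem h _
        rw [hχ0]
        simp only [zero_mul, mul_zero, sub_zero, zero_add]
        positivity
    -- take conditional expectations
    have hRint : Integrable (fun ω =>
        -(1 / 2) * (βk * muc) * (χ ω * norm2 (gradf (xk ω)) ^ 2)
          - βk * (ψ ω ⬝ᵥ (gk ω - gradf (xk ω)))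
          + c ^ 2 / (2 * (βk * muc)) * norm2 (gk ω - gradf (xk ω)) ^ 2) μ :=
      ((hR1int.const_mul _).sub (hR2int.const_mul _)).add (hgk_var_int.const_mul _)
    have hmono := condExp_mono (m := F) hLint hRint hae1
    -- compute the conditional expectation of the right-hand side
    have hR1SM : StronglyMeasurable[F] fun ω => χ ω * norm2 (gradf (xk ω)) ^ 2 :=
      (hχF.mul (hn2F.pow_const 2)).stronglyMeasurable
    have hcond1 : μ[(fun ω => χ ω * norm2 (gradf (xk ω)) ^ 2)|F]
        = fun ω => χ ω * norm2 (gradf (xk ω)) ^ 2 :=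
      condExp_of_stronglyMeasurable hF hR1SM hR1int
    have hcondR : μ[(fun ω =>
        -(1 / 2) * (βk * muc) * (χ ω * norm2 (gradf (xk ω)) ^ 2)
          - βk * (ψ ω ⬝ᵥ (gk ω - gradf (xk ω)))
          + c ^ 2 / (2 * (βk * muc)) * norm2 (gk ω - gradf (xk ω)) ^ 2)|F]
        ≤ᵐ[μ] fun ω =>
          -(1 / 2) * (βk * muc) * (χ ω * norm2 (gradf (xk ω)) ^ 2)
            + c ^ 2 / (2 * (βk * muc)) * (σ ^ 2 / n) := by
      have hRsplit : (fun ω =>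
          -(1 / 2) * (βk * muc) * (χ ω * norm2 (gradf (xk ω)) ^ 2)
            - βk * (ψ ω ⬝ᵥ (gk ω - gradf (xk ω)))
            + c ^ 2 / (2 * (βk * muc)) * norm2 (gk ω - gradf (xk ω)) ^ 2)
          = ((-(1 / 2) * (βk * muc)) • fun ω => χ ω * norm2 (gradf (xk ω)) ^ 2)
            - (βk • fun ω => ψ ω ⬝ᵥ (gk ω - gradf (xk ω)))
            + ((c ^ 2 / (2 * (βk * muc))) • fun ω => norm2 (gk ω - gradf (xk ω)) ^ 2) := rfl
      rw [hRsplit]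
      have hs1 : Integrable ((-(1 / 2) * (βk * muc)) •
          fun ω => χ ω * norm2 (gradf (xk ω)) ^ 2) μ := hR1int.smul _
      have hs2 : Integrable (βk • fun ω => ψ ω ⬝ᵥ (gk ω - gradf (xk ω))) μ := hR2int.smul _
      have hs3 : Integrable ((c ^ 2 / (2 * (βk * muc))) •
          fun ω => norm2 (gk ω - gradf (xk ω)) ^ 2) μ := hgk_var_int.smul _
      have h01 := condExp_add (m := F) (μ := μ) (hs1.sub hs2) hs3
      have h02 := condExp_sub (m := F) (μ := μ) hs1 hs2
      have h03 := condExp_smul (m := F) (μ := μ) (-(1 / 2) * (βk * muc))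
        (fun ω => χ ω * norm2 (gradf (xk ω)) ^ 2)
      have h04 := condExp_smul (m := F) (μ := μ) βk
        (fun ω => ψ ω ⬝ᵥ (gk ω - gradf (xk ω)))
      have h05 := condExp_smul (m := F) (μ := μ) (c ^ 2 / (2 * (βk * muc)))
        (fun ω => norm2 (gk ω - gradf (xk ω)) ^ 2)
      have h06 : μ[(fun ω => ψ ω ⬝ᵥ (gk ω - gradf (xk ω)))|F] =ᵐ[μ] fun _ => (0 : ℝ) := by
        filter_upwards [hpullE, he_condexp] with ω hω h0ω
        have hω' : (μ[(fun ω' => ψ ω' ⬝ᵥ (gk ω' - gradf (xk ω')))|F]) ω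
            = ψ ω ⬝ᵥ (μ[(fun ω' => gk ω' - gradf (xk ω'))|F]) ω := hω
        rw [hω', h0ω]
        exact dotProduct_zero _
      filter_upwards [h01, h02, h03, h04, h05, h06, hgk_var] with ω e01 e02 e03 e04 e05 e06 evar
      rw [e01]
      simp only [Pi.add_apply, Pi.sub_apply] at e02 ⊢
      rw [e02, e03, e04, e05]
      simp only [Pi.smul_apply, smul_eq_mul, hcond1, e06, mul_zero, sub_zero]
      have hcoef : 0 ≤ c ^ 2 / (2 * (βk * muc)) := by positivity
      have hv := mul_le_mul_of_nonneg_left evar hcoef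
      linarith
    -- combine everything
    filter_upwards [hmono, hpullZ, hcondR] with ω hmω hpω hrω hMω
    have hχ1 : χ ω = 1 := by rw [hχdef]; exact Set.indicator_of_mem (show ω ∈ A from hMω) _
    have hψω : ψ ω = gradf (xk ω) := by
      have : ψ ω = χ ω • gradf (xk ω) := rfl
      rw [this, hχ1, one_smul]
    have hp' : (μ[(fun ω' => ψ ω' ⬝ᵥ (H ω').mulVec (-(gk ω')))|F]) ω
        = ψ ω ⬝ᵥ (μ[(fun ω' => (H ω').mulVec (-(gk ω')))|F]) ω := hpω
    have hfinal : gradf (xk ω) ⬝ᵥ ((μ[(fun ω' => (H ω').mulVec (-(gk ω'))) | F]) ω) ≤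
        -(1 / 2) * (βk * muc) * norm2 (gradf (xk ω)) ^ 2
          + c ^ 2 / (2 * (βk * muc)) * (σ ^ 2 / n) := by
      have h1 := le_trans hmω hrω
      rw [hp', hψω] at h1
      rwa [hχ1, one_mul] at h1
    refine le_trans hfinal (le_of_eq ?_)
    rw [hcdef]
    ring
  have hall := ae_all_iff.2 key
  filter_upwards [hall] with ω hω
  exact hω ⌈norm2 (gradf (xk ω))⌉₊ (Nat.le_ceil _)
end

section
/- In the linear Anderson mixing setup, let k ≥ 1 and suppose rank(R_k) = k. Then the projected Anderson mixing iterate coincides with the GMRES iterate: x̄_k = x_k^G, i.e., x̄_k is the unique minimizer of x ↦ ‖b − Ax‖₂ over the affine subspace x₀ + 𝒦_k(A, r(x₀)). -/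
/-!
Every Anderson mixing step only adds `r_j`, columns of `X_j` and columns of `R_j = -A X_j`, so
`x_j - x₀ ∈ 𝒦_j` and the columns of `X_k` span a subspace of `𝒦_k`. Hence the range of `R_k` lies
in `A 𝒦_k`, which has dimension at most `k`; the rank condition makes the two equal. For
`y ∈ x₀ + 𝒦_k` this writes `r(y) = r_k - R_k G`, so minimizing `‖r(y)‖` over `x₀ + 𝒦_k` is the
least-squares problem solved by `Γ_k`, and `x̄_k` attains the minimum. Uniqueness comes from
strict convexity of the Euclidean norm and injectivity of `A`.
-/

open Matrix

/-- The residual `r(x) = b − Ax`. -/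
def resid {d : ℕ} (A : Matrix (Fin d) (Fin d) ℝ) (b : Fin d → ℝ) (x : Fin d → ℝ) :
    Fin d → ℝ := b - A.mulVec x

/-- The matrix whose columns are the first `j` forward differences of the sequence `v`. -/
def diffMat {d : ℕ} (v : ℕ → Fin d → ℝ) (j : ℕ) : Matrix (Fin d) (Fin j) ℝ :=
  Matrix.of fun i (l : Fin j) => v ((l : ℕ) + 1) i - v (l : ℕ) i

/-- The `k`-th Krylov subspace `𝒦_k(A, v) = span{v, Av, …, A^{k−1}v}`. -/
def krylov {d : ℕ} (A : Matrix (Fin d) (Fin d) ℝ) (v : Fin d → ℝ) (k : ℕ) :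
    Submodule ℝ (Fin d → ℝ) :=
  Submodule.span ℝ {w | ∃ i < k, w = (A ^ i).mulVec v}

lemma norm2_eq_norm_toLp {n : ℕ} (v : Fin n → ℝ) :
    norm2 v = ‖(WithLp.toLp 2 v : EuclideanSpace ℝ (Fin n))‖ := by
  simp [norm2, EuclideanSpace.norm_eq]

lemma mulVec_eq_of_norm2_sub_mulVec_le {n : ℕ} {ι : Type*} [Fintype ι]
    {M : Matrix (Fin n) ι ℝ} {u : Fin n → ℝ} {Γ G : ι → ℝ}
    (hΓ : ∀ H, norm2 (u - M *ᵥ Γ) ≤ norm2 (u - M *ᵥ H))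
    (hG : norm2 (u - M *ᵥ G) ≤ norm2 (u - M *ᵥ Γ)) :
    M *ᵥ G = M *ᵥ Γ := by
  have hmid : (1 / 2 : ℝ) • (WithLp.toLp 2 (u - M *ᵥ Γ) + WithLp.toLp 2 (u - M *ᵥ G) :
      EuclideanSpace ℝ (Fin n)) = WithLp.toLp 2 (u - M *ᵥ ((1 / 2 : ℝ) • (Γ + G))) := by
    ext i
    simp only [WithLp.toLp_sub, PiLp.add_apply, PiLp.smul_apply, PiLp.sub_apply, mulVec_add,
      mulVec_smul, Pi.sub_apply, Pi.add_apply, Pi.smul_apply, smul_eq_mul]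
    ring
  have heq : (WithLp.toLp 2 (u - M *ᵥ Γ) : EuclideanSpace ℝ (Fin n)) =
      WithLp.toLp 2 (u - M *ᵥ G) := by
    by_contra hne
    have hnorm : ‖(WithLp.toLp 2 (u - M *ᵥ Γ) : EuclideanSpace ℝ (Fin n))‖ =
        ‖(WithLp.toLp 2 (u - M *ᵥ G) : EuclideanSpace ℝ (Fin n))‖ := by
      simpa only [← norm2_eq_norm_toLp] using le_antisymm (hΓ G) hG
    have hlt := (norm_midpoint_lt_iff hnorm).2 hne
    rw [hmid, ← norm2_eq_norm_toLp, ← norm2_eq_norm_toLp] at hlt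
    exact (hΓ _).not_gt hlt
  exact (sub_right_injective (WithLp.toLp_injective 2 heq)).symm

section Krylov

variable {d : ℕ} (A : Matrix (Fin d) (Fin d) ℝ) (v : Fin d → ℝ)

lemma krylov_mono {j k : ℕ} (h : j ≤ k) : krylov A v j ≤ krylov A v k :=
  Submodule.span_mono fun _ ⟨i, hi, hw⟩ => ⟨i, hi.trans_le h, hw⟩

lemma self_mem_krylov {k : ℕ} (hk : 1 ≤ k) : v ∈ krylov A v k :=
  Submodule.subset_span ⟨0, hk, by simp⟩

lemma mulVec_mem_krylov {j : ℕ} {w : Fin d → ℝ} (hw : w ∈ krylov A v j) :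
    A *ᵥ w ∈ krylov A v (j + 1) := by
  induction hw using Submodule.span_induction with
  | mem z hz =>
      obtain ⟨i, hi, rfl⟩ := hz
      exact Submodule.subset_span ⟨i + 1, by omega, by rw [mulVec_mulVec, pow_succ']⟩
  | zero => simp
  | add y z _ _ hy hz => rw [mulVec_add]; exact add_mem hy hz
  | smul a y _ hy => rw [mulVec_smul]; exact Submodule.smul_mem _ a hy

lemma krylov_eq_span_range (k : ℕ) :
    krylov A v k = Submodule.span ℝ (Set.range fun i : Fin k => (A ^ (i : ℕ)) *ᵥ v) := by
  rw [krylov]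
  congr 1
  ext w
  exact ⟨fun ⟨i, hi, hw⟩ => ⟨⟨i, hi⟩, hw.symm⟩, fun ⟨i, hw⟩ => ⟨i, i.2, hw.symm⟩⟩

lemma finrank_krylov_le (k : ℕ) : Module.finrank ℝ (krylov A v k) ≤ k := by
  rw [krylov_eq_span_range]
  exact (finrank_range_le_card (R := ℝ) _).trans_eq (Fintype.card_fin k)

end Krylov

lemma diffMat_mulVec {d j : ℕ} (v : ℕ → Fin d → ℝ) (G : Fin j → ℝ) :
    diffMat v j *ᵥ G = ∑ l : Fin j, G l • (v (l + 1) - v l) := by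
  funext i
  simp [diffMat, mulVec, dotProduct, Finset.sum_apply, mul_comm]

lemma diffMat_mulVec_mem {d j : ℕ} {v : ℕ → Fin d → ℝ} {K : Submodule ℝ (Fin d → ℝ)}
    (hv : ∀ i ≤ j, v i - v 0 ∈ K) (G : Fin j → ℝ) : diffMat v j *ᵥ G ∈ K := by
  rw [diffMat_mulVec]
  refine Submodule.sum_mem _ fun l _ => Submodule.smul_mem _ _ ?_
  rw [← sub_sub_sub_cancel_right _ _ (v 0)]
  exact sub_mem (hv _ l.2) (hv _ l.2.le)

section Residual

variable {d : ℕ} (A : Matrix (Fin d) (Fin d) ℝ) (b : Fin d → ℝ)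

lemma resid_sub_resid (y z : Fin d → ℝ) : resid A b y - resid A b z = -(A *ᵥ (y - z)) := by
  simp only [resid, mulVec_sub]
  abel

lemma resid_sub (y w : Fin d → ℝ) : resid A b (y - w) = resid A b y + A *ᵥ w := by
  simp only [resid, mulVec_sub]
  abel

lemma resid_injective (hA : Function.Injective A.mulVec) : Function.Injective (resid A b) :=
  fun _ _ h => hA (sub_right_injective h)

lemma diffMat_resid_mulVec (x : ℕ → Fin d → ℝ) {j : ℕ} (G : Fin j → ℝ) :
    diffMat (fun i => resid A b (x i)) j *ᵥ G = -(A *ᵥ (diffMat x j *ᵥ G)) := by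
  simp only [diffMat_mulVec, resid_sub_resid, mulVec_sum, mulVec_smul, smul_neg,
    Finset.sum_neg_distrib]

end Residual

section AndersonMixing

variable {d : ℕ} (A : Matrix (Fin d) (Fin d) ℝ) (b : Fin d → ℝ) (x : ℕ → Fin d → ℝ)

lemma resid_sub_diffMat_mulVec {k : ℕ} (G : Fin k → ℝ) :
    resid A b (x k - diffMat x k *ᵥ G) =
      resid A b (x k) - diffMat (fun i => resid A b (x i)) k *ᵥ G := by
  rw [resid_sub, diffMat_resid_mulVec, sub_neg_eq_add]

/-- For `j = 0` the difference matrices are empty, so the step reads `x₁ = x₀ + r₀`. -/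
def IsAndersonMixing (Γ : (j : ℕ) → Fin j → ℝ) : Prop :=
  ∀ j, x (j + 1) = x j + resid A b (x j)
    - (diffMat x j + diffMat (fun i => resid A b (x i)) j) *ᵥ Γ j

variable {A b x} {Γ : (j : ℕ) → Fin j → ℝ}

lemma IsAndersonMixing.sub_mem_krylov (hx : IsAndersonMixing A b x Γ) :
    ∀ j, ∀ i ≤ j, x i - x 0 ∈ krylov A (resid A b (x 0)) j := by
  intro j
  induction j with
  | zero => simp
  | succ j ih =>
    intro i hi
    rcases hi.lt_or_eq with hi | rfl
    · exact krylov_mono A _ j.le_succ (ih i (Nat.lt_succ_iff.1 hi))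
    have hxj : x j - x 0 ∈ krylov A (resid A b (x 0)) j := ih j le_rfl
    have hX : diffMat x j *ᵥ Γ j ∈ krylov A (resid A b (x 0)) j := diffMat_mulVec_mem ih _
    have hr : resid A b (x j) = resid A b (x 0) + -(A *ᵥ (x j - x 0)) := by
      rw [← resid_sub_resid, add_sub_cancel]
    rw [hx j, add_mulVec, diffMat_resid_mulVec, hr]
    -- `x_{j+1} - x₀ = (x_j - x₀) + r₀ - A (x_j - x₀) - X_j Γ_j + A X_j Γ_j`
    have hmem := add_mem (sub_mem (add_mem (add_mem (krylov_mono A _ j.le_succ hxj)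
      (self_mem_krylov A _ j.succ_pos)) (neg_mem (mulVec_mem_krylov A _ hxj)))
      (krylov_mono A _ j.le_succ hX)) (mulVec_mem_krylov A _ hX)
    convert hmem using 1
    abel

lemma IsAndersonMixing.range_diffMat_resid_eq (hx : IsAndersonMixing A b x Γ) {k : ℕ}
    (hrank : (diffMat (fun i => resid A b (x i)) k).rank = k) :
    LinearMap.range (diffMat (fun i => resid A b (x i)) k).mulVecLin =
      (krylov A (resid A b (x 0)) k).map A.mulVecLin := by
  refine Submodule.eq_of_le_of_finrank_le ?_ ?_
  · rintro _ ⟨G, rfl⟩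
    refine ⟨-(diffMat x k *ᵥ G), neg_mem (diffMat_mulVec_mem (hx.sub_mem_krylov k) G), ?_⟩
    simp [diffMat_resid_mulVec, mulVec_neg]
  · calc Module.finrank ℝ ((krylov A (resid A b (x 0)) k).map A.mulVecLin)
        ≤ Module.finrank ℝ (krylov A (resid A b (x 0)) k) := Submodule.finrank_map_le _ _
      _ ≤ k := finrank_krylov_le A _ k
      _ = _ := hrank.symm

lemma IsAndersonMixing.exists_resid_eq (hx : IsAndersonMixing A b x Γ) {k : ℕ}
    (hrank : (diffMat (fun i => resid A b (x i)) k).rank = k) {y : Fin d → ℝ}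
    (hy : y - x 0 ∈ krylov A (resid A b (x 0)) k) :
    ∃ G, resid A b y = resid A b (x k) - diffMat (fun i => resid A b (x i)) k *ᵥ G := by
  have hyk : A *ᵥ (y - x k) ∈
      LinearMap.range (diffMat (fun i => resid A b (x i)) k).mulVecLin := by
    rw [hx.range_diffMat_resid_eq hrank, ← sub_sub_sub_cancel_right y (x k) (x 0)]
    exact ⟨_, sub_mem hy (hx.sub_mem_krylov k k le_rfl), rfl⟩
  obtain ⟨G, hG⟩ := hyk
  refine ⟨G, ?_⟩
  rw [mulVecLin_apply] at hG
  rw [hG, sub_eq_add_neg, ← resid_sub_resid, add_sub_cancel]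

end AndersonMixing

theorem anderson_mixing_eq_gmres_general (d : ℕ)
    (A : Matrix (Fin d) (Fin d) ℝ) (hA : A.PosDef)
    (b x0 : Fin d → ℝ)
    (x : ℕ → Fin d → ℝ) (Γ : (j : ℕ) → Fin j → ℝ)
    (hx0 : x 0 = x0)
    (hx1 : x 1 = x 0 + resid A b (x 0))
    (hΓ : ∀ j : ℕ, ∀ G : Fin j → ℝ,
      norm2 (resid A b (x j) - (diffMat (fun i => resid A b (x i)) j).mulVec (Γ j)) ≤
        norm2 (resid A b (x j) - (diffMat (fun i => resid A b (x i)) j).mulVec G))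
    (hrec : ∀ j : ℕ, 1 ≤ j →
      x (j + 1) = x j + resid A b (x j)
        - (diffMat x j + diffMat (fun i => resid A b (x i)) j).mulVec (Γ j))
    (k : ℕ)
    (hrank : (diffMat (fun i => resid A b (x i)) k).rank = k) :
    (x k - (diffMat x k).mulVec (Γ k)) - x0 ∈ krylov A (resid A b x0) k ∧
    (∀ y : Fin d → ℝ, y - x0 ∈ krylov A (resid A b x0) k →
      norm2 (resid A b (x k - (diffMat x k).mulVec (Γ k))) ≤ norm2 (resid A b y)) ∧
    (∀ y : Fin d → ℝ, y - x0 ∈ krylov A (resid A b x0) k →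
      (∀ z : Fin d → ℝ, z - x0 ∈ krylov A (resid A b x0) k →
        norm2 (resid A b y) ≤ norm2 (resid A b z)) →
      y = x k - (diffMat x k).mulVec (Γ k)) := by
  subst hx0
  have hx : IsAndersonMixing A b x Γ := by
    rintro (_ | j)
    · simpa using hx1
    · exact hrec (j + 1) j.succ_pos
  have hmem : x k - diffMat x k *ᵥ Γ k - x 0 ∈ krylov A (resid A b (x 0)) k := by
    rw [sub_right_comm]
    exact sub_mem (hx.sub_mem_krylov k k le_rfl) (diffMat_mulVec_mem (hx.sub_mem_krylov k) _)
  have hres := resid_sub_diffMat_mulVec A b x (Γ k)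
  refine ⟨hmem, fun y hy => ?_, fun y hy hmin => ?_⟩
  · obtain ⟨G, hG⟩ := hx.exists_resid_eq hrank hy
    rw [hres, hG]
    exact hΓ k G
  · obtain ⟨G, hG⟩ := hx.exists_resid_eq hrank hy
    have hle := hmin _ hmem
    rw [hG, hres] at hle
    have hGΓ := mulVec_eq_of_norm2_sub_mulVec_le (hΓ k) hle
    exact resid_injective A b (mulVec_injective_of_isUnit hA.isUnit) (by rw [hG, hres, hGΓ])

/-- **Proposition 1** (full-memory Anderson mixing is GMRES on strongly convex quadratics):
if `rank R_k = k`, the projected AM iterate `x̄_k = x_k − X_kΓ_k` is the unique minimizer of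
`x ↦ ‖b − Ax‖₂` over the affine subspace `x₀ + 𝒦_k(A, r(x₀))`, i.e. `x̄_k = x_k^G`. -/
theorem anderson_mixing_eq_gmres (d : ℕ) (hd : 1 ≤ d)
    (A : Matrix (Fin d) (Fin d) ℝ) (hA : A.PosDef)
    (b x0 : Fin d → ℝ)
    (x : ℕ → Fin d → ℝ) (Γ : (j : ℕ) → Fin j → ℝ)
    (hx0 : x 0 = x0)
    (hx1 : x 1 = x 0 + resid A b (x 0))
    (hΓ : ∀ j : ℕ, ∀ G : Fin j → ℝ,
      norm2 (resid A b (x j) - (diffMat (fun i => resid A b (x i)) j).mulVec (Γ j)) ≤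
        norm2 (resid A b (x j) - (diffMat (fun i => resid A b (x i)) j).mulVec G))
    (hrec : ∀ j : ℕ, 1 ≤ j →
      x (j + 1) = x j + resid A b (x j)
        - (diffMat x j + diffMat (fun i => resid A b (x i)) j).mulVec (Γ j))
    (k : ℕ) (hk : 1 ≤ k)
    (hrank : (diffMat (fun i => resid A b (x i)) k).rank = k) :
    (x k - (diffMat x k).mulVec (Γ k)) - x0 ∈ krylov A (resid A b x0) k ∧
    (∀ y : Fin d → ℝ, y - x0 ∈ krylov A (resid A b x0) k →
      norm2 (resid A b (x k - (diffMat x k).mulVec (Γ k))) ≤ norm2 (resid A b y)) ∧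
    (∀ y : Fin d → ℝ, y - x0 ∈ krylov A (resid A b x0) k →
      (∀ z : Fin d → ℝ, z - x0 ∈ krylov A (resid A b x0) k →
        norm2 (resid A b y) ≤ norm2 (resid A b z)) →
      y = x k - (diffMat x k).mulVec (Γ k)) :=
  anderson_mixing_eq_gmres_general d A hA b x0 x Γ hx0 hx1 hΓ hrec k hrank
end

section
/- In the linear Anderson mixing setup, let s > 1 and suppose rank(R_j) = j holds for all 1 ≤ j < s but rank(R_s) < s. Then Anderson mixing stagnates: for every minimizer Γ_s of Γ ↦ ‖r_s − R_sΓ‖₂, one has x_s − X_sΓ_s = x̄_{s−1}; in particular x̄_s = x̄_{s−1}. -/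
/-! Let `k = s − 1` and let `w = r_k − R_kΓ_k` be the projected residual. Then `x_s = x̄_k + w`
and `r_s = w − Aw`. Since `R_k` has full column rank and `R_s` does not, the new column
`r_s − r_k` of `R_s` lies in the range of `R_k`, hence so does `Aw`. By least squares `w` is
orthogonal to that range, so `⟨w, Aw⟩ = 0` and `w = 0`. Thus `x_s = x̄_k` and `r_s = 0`, so every
minimizer `Γ` has `R_sΓ = −AX_sΓ = 0`, i.e. `X_sΓ = 0`. -/

open Matrix

lemma norm2_le_norm2_iff {m : ℕ} {a c : Fin m → ℝ} : norm2 a ≤ norm2 c ↔ a ⬝ᵥ a ≤ c ⬝ᵥ c := by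
  simp only [norm2, dotProduct, ← sq]
  exact Real.sqrt_le_sqrt_iff (by positivity)

lemma dotProduct_eq_zero_of_forall_le {ι : Type*} [Fintype ι] {w u : ι → ℝ}
    (h : ∀ t : ℝ, w ⬝ᵥ w ≤ (w - t • u) ⬝ᵥ (w - t • u)) : w ⬝ᵥ u = 0 := by
  have hquad : ∀ t : ℝ, 0 ≤ u ⬝ᵥ u * (t * t) + -2 * (w ⬝ᵥ u) * t + 0 := fun t => by
    have := h t
    simp only [sub_dotProduct, dotProduct_sub, smul_dotProduct, dotProduct_smul, smul_eq_mul,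
      dotProduct_comm u w] at this
    linarith
  have := discrim_le_zero hquad
  rw [discrim] at this
  nlinarith [sq_nonneg (w ⬝ᵥ u)]

lemma Matrix.PosDef.eq_zero_of_orthogonal_of_mulVec_mem {ι κ : Type*} [Fintype ι] [Fintype κ]
    {A : Matrix ι ι ℝ} (hA : A.PosDef) {R : Matrix ι κ ℝ} {w : ι → ℝ}
    (horth : ∀ u, w ⬝ᵥ R *ᵥ u = 0) (hAw : A *ᵥ w ∈ LinearMap.range R.mulVecLin) : w = 0 := by
  obtain ⟨u, hu⟩ := hAw
  by_contra hw
  have := hA.dotProduct_mulVec_pos hw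
  rw [star_trivial, ← hu, mulVecLin_apply, horth] at this
  exact lt_irrefl _ this

lemma col_last_mem_range_of_rank_lt {K m : Type*} [Field K] {k : ℕ} (M : Matrix m (Fin (k + 1)) K)
    (hk : (M.submatrix id Fin.castSucc).rank = k) (hlt : M.rank < k + 1) :
    M.col (Fin.last k) ∈ LinearMap.range (M.submatrix id Fin.castSucc).mulVecLin := by
  have hle : LinearMap.range (M.submatrix id Fin.castSucc).mulVecLin ≤
      LinearMap.range M.mulVecLin := by
    rw [range_mulVecLin, range_mulVecLin]
    exact Submodule.span_mono (Set.range_comp_subset_range Fin.castSucc M.col)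
  rw [Submodule.eq_of_le_of_finrank_le hle (by rw [← rank, ← rank]; omega), range_mulVecLin]
  exact Submodule.subset_span ⟨_, rfl⟩

lemma sub_mem_range_diffMat_of_rank {d : ℕ} (v : ℕ → Fin d → ℝ) (k : ℕ)
    (hk : (diffMat v k).rank = k) (hlt : (diffMat v (k + 1)).rank < k + 1) :
    v (k + 1) - v k ∈ LinearMap.range (diffMat v k).mulVecLin :=
  col_last_mem_range_of_rank_lt (diffMat v (k + 1)) hk hlt

def IsLeastSquaresSol {m n : ℕ} (M : Matrix (Fin m) (Fin n) ℝ) (v : Fin m → ℝ) (G : Fin n → ℝ) :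
    Prop :=
  ∀ G', norm2 (v - M *ᵥ G) ≤ norm2 (v - M *ᵥ G')

namespace IsLeastSquaresSol

variable {m n : ℕ} {M : Matrix (Fin m) (Fin n) ℝ} {v : Fin m → ℝ} {G : Fin n → ℝ}

lemma dotProduct_mulVec_eq_zero (h : IsLeastSquaresSol M v G) (u : Fin n → ℝ) :
    (v - M *ᵥ G) ⬝ᵥ M *ᵥ u = 0 :=
  dotProduct_eq_zero_of_forall_le fun t => by
    have := norm2_le_norm2_iff.mp (h (G + t • u))
    rwa [mulVec_add, mulVec_smul, sub_add_eq_sub_sub] at this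

lemma mulVec_eq (h : IsLeastSquaresSol M v G) {G₀ : Fin n → ℝ} (hv : M *ᵥ G₀ = v) :
    M *ᵥ G = v := by
  have hle := norm2_le_norm2_iff.mp (h G₀)
  rw [hv, sub_self, dotProduct_zero] at hle
  have hzero := dotProduct_self_eq_zero.mp
    (le_antisymm hle (Fintype.sum_nonneg fun i => mul_self_nonneg _))
  exact (sub_eq_zero.mp hzero).symm

end IsLeastSquaresSol

section Residual

variable {d : ℕ} {A : Matrix (Fin d) (Fin d) ℝ} {b : Fin d → ℝ}

lemma resid_add (x y : Fin d → ℝ) : resid A b (x + y) = resid A b x - A *ᵥ y := by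
  simp only [resid, mulVec_add]
  abel

lemma resid_sub_mulVec {k : ℕ} (X : Matrix (Fin d) (Fin k) ℝ) (x : Fin d → ℝ) (G : Fin k → ℝ) :
    resid A b (x - X *ᵥ G) = resid A b x - (-A * X) *ᵥ G := by
  rw [sub_eq_add_neg, resid_add, Matrix.neg_mul, neg_mulVec, ← mulVec_mulVec, mulVec_neg]

lemma diffMat_resid (x : ℕ → Fin d → ℝ) (j : ℕ) :
    diffMat (fun i => resid A b (x i)) j = -A * diffMat x j := by
  ext i l
  simp only [diffMat, resid, of_apply, Pi.sub_apply, Matrix.neg_apply, neg_mul, mul_apply, mulVec,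
    dotProduct, mul_sub, Finset.sum_sub_distrib, Finset.sum_neg_distrib]
  ring

lemma anderson_update_eq_add {k : ℕ} (X : Matrix (Fin d) (Fin k) ℝ) (x : Fin d → ℝ)
    (G : Fin k → ℝ) :
    x + resid A b x - (X + -A * X) *ᵥ G = (x - X *ᵥ G) + (resid A b x - (-A * X) *ᵥ G) := by
  rw [add_mulVec]
  abel

theorem resid_sub_mulVec_eq_zero_of_mem_range (hA : A.PosDef) {k : ℕ}
    {X : Matrix (Fin d) (Fin k) ℝ} {x : Fin d → ℝ} {G : Fin k → ℝ}
    (hG : IsLeastSquaresSol (-A * X) (resid A b x) G)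
    (hmem : resid A b (x + resid A b x - (X + -A * X) *ᵥ G) - resid A b x ∈
      LinearMap.range (-A * X).mulVecLin) :
    resid A b x - (-A * X) *ᵥ G = 0 := by
  set w := resid A b x - (-A * X) *ᵥ G with hw
  have hnext : resid A b (x + resid A b x - (X + -A * X) *ᵥ G) = w - A *ᵥ w := by
    rw [anderson_update_eq_add, resid_add, resid_sub_mulVec]
  have hAw : A *ᵥ w = -(resid A b (x + resid A b x - (X + -A * X) *ᵥ G) - resid A b x) -
      (-A * X) *ᵥ G := by
    rw [hnext, hw]
    abel
  refine hA.eq_zero_of_orthogonal_of_mulVec_mem hG.dotProduct_mulVec_eq_zero ?_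
  rw [hAw]
  exact sub_mem (neg_mem hmem) ⟨G, rfl⟩

end Residual

theorem anderson_mixing_stagnation_general (d : ℕ)
    (A : Matrix (Fin d) (Fin d) ℝ) (hA : A.PosDef)
    (b : Fin d → ℝ)
    (x : ℕ → Fin d → ℝ) (Γ : (j : ℕ) → Fin j → ℝ)
    (hΓ : ∀ j : ℕ, ∀ G : Fin j → ℝ,
      norm2 (resid A b (x j) - (diffMat (fun i => resid A b (x i)) j).mulVec (Γ j)) ≤
        norm2 (resid A b (x j) - (diffMat (fun i => resid A b (x i)) j).mulVec G))
    (hrec : ∀ j : ℕ, 1 ≤ j →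
      x (j + 1) = x j + resid A b (x j)
        - (diffMat x j + diffMat (fun i => resid A b (x i)) j).mulVec (Γ j))
    (s : ℕ) (hs : 1 < s)
    (hrank : ∀ j : ℕ, 1 ≤ j → j < s → (diffMat (fun i => resid A b (x i)) j).rank = j)
    (hdef : (diffMat (fun i => resid A b (x i)) s).rank < s) :
    (∀ G : Fin s → ℝ,
      (∀ G' : Fin s → ℝ,
        norm2 (resid A b (x s) - (diffMat (fun i => resid A b (x i)) s).mulVec G) ≤
          norm2 (resid A b (x s) - (diffMat (fun i => resid A b (x i)) s).mulVec G')) →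
      x s - (diffMat x s).mulVec G = x (s - 1) - (diffMat x (s - 1)).mulVec (Γ (s - 1))) ∧
    x s - (diffMat x s).mulVec (Γ s)
      = x (s - 1) - (diffMat x (s - 1)).mulVec (Γ (s - 1)) := by
  obtain ⟨k, rfl⟩ : ∃ k, s = k + 1 := ⟨s - 1, by omega⟩
  have hk : 1 ≤ k := by omega
  have hmem := sub_mem_range_diffMat_of_rank _ k (hrank k hk k.lt_succ_self) hdef
  simp only [diffMat_resid, Nat.add_sub_cancel] at hΓ hrec hmem ⊢
  have hw := resid_sub_mulVec_eq_zero_of_mem_range hA (hΓ k) (by rwa [← hrec k hk])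
  have hx : x (k + 1) = x k - diffMat x k *ᵥ Γ k := by
    rw [hrec k hk, anderson_update_eq_add, hw, add_zero]
  have hr : resid A b (x (k + 1)) = 0 := by
    rw [hx, resid_sub_mulVec, hw]
  have stagnates : ∀ G, IsLeastSquaresSol (-A * diffMat x (k + 1)) (resid A b (x (k + 1))) G →
      x (k + 1) - diffMat x (k + 1) *ᵥ G = x k - diffMat x k *ᵥ Γ k := by
    intro G hG
    have hRG := hG.mulVec_eq (G₀ := 0) (by rw [hr, mulVec_zero])
    rw [hr, Matrix.neg_mul, neg_mulVec, neg_eq_zero, ← mulVec_mulVec] at hRG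
    rw [mulVec_injective_iff_isUnit.mpr hA.isUnit (hRG.trans (mulVec_zero A).symm), sub_zero, hx]
  exact ⟨stagnates, stagnates _ (hΓ _)⟩

/-- **Proposition 2** (stagnation of Anderson mixing upon rank deficiency): if
`rank R_j = j` for `1 ≤ j < s` but `rank R_s < s`, then for every minimizer `Γ_s` of
`Γ ↦ ‖r_s − R_sΓ‖₂` one has `x_s − X_sΓ_s = x̄_{s−1}`; in particular `x̄_s = x̄_{s−1}`. -/
theorem anderson_mixing_stagnation (d : ℕ) (hd : 1 ≤ d)
    (A : Matrix (Fin d) (Fin d) ℝ) (hA : A.PosDef)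
    (b x0 : Fin d → ℝ)
    (x : ℕ → Fin d → ℝ) (Γ : (j : ℕ) → Fin j → ℝ)
    (hx0 : x 0 = x0)
    (hx1 : x 1 = x 0 + resid A b (x 0))
    (hΓ : ∀ j : ℕ, ∀ G : Fin j → ℝ,
      norm2 (resid A b (x j) - (diffMat (fun i => resid A b (x i)) j).mulVec (Γ j)) ≤
        norm2 (resid A b (x j) - (diffMat (fun i => resid A b (x i)) j).mulVec G))
    (hrec : ∀ j : ℕ, 1 ≤ j →
      x (j + 1) = x j + resid A b (x j)
        - (diffMat x j + diffMat (fun i => resid A b (x i)) j).mulVec (Γ j))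
    (s : ℕ) (hs : 1 < s)
    (hrank : ∀ j : ℕ, 1 ≤ j → j < s → (diffMat (fun i => resid A b (x i)) j).rank = j)
    (hdef : (diffMat (fun i => resid A b (x i)) s).rank < s) :
    (∀ G : Fin s → ℝ,
      (∀ G' : Fin s → ℝ,
        norm2 (resid A b (x s) - (diffMat (fun i => resid A b (x i)) s).mulVec G) ≤
          norm2 (resid A b (x s) - (diffMat (fun i => resid A b (x i)) s).mulVec G')) →
      x s - (diffMat x s).mulVec G = x (s - 1) - (diffMat x (s - 1)).mulVec (Γ (s - 1))) ∧
    x s - (diffMat x s).mulVec (Γ s)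
      = x (s - 1) - (diffMat x (s - 1)).mulVec (Γ (s - 1)) :=
  anderson_mixing_stagnation_general d A hA b x Γ hΓ hrec s hs hrank hdef
end
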